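/- arXiv:2511.10548 — 2 statements merged into one kernel-verified Lean document; each statement's English description precedes it below -/
import Mathlib

section
/- Let a_1 < a_2 < a_3 be positive integers and e_1, e_2, e_3 be positive integers, and set b_2 = a_2 - a_1 and b_3 = a_3 - a_2. If the Young diagram with e_i rows of length a_i (i = 1, 2, 3) is wide, then, as integers, max(0, a_2 e_3 - b_3 \cdot min(a_2, e_3)) \le min( min(a_1 e_3, a_1(a_2 - e_1 - e_2)) + min(b_2 e_3, b_2(a_2 - e_2)), (a_2 - b_3) e_3 + b_3^2 ). -/
/-- The multiset of row lengths of the Young diagram `Y(a;e)`: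
`e i` rows of length `a i` for `i = 1, ..., p`. -/
def rowMultiset (p : ℕ) (a e : ℕ → ℕ) : Multiset ℕ :=
  ∑ i ∈ Finset.Icc 1 p, Multiset.replicate (e i) (a i)

/-- The sum of the `w` largest elements of the multiset `S`
(the sum of all of `S` if `S` has at most `w` elements). -/
def topSum (S : Multiset ℕ) (w : ℕ) : ℕ :=
  ((Multiset.sort S (· ≤ ·)).reverse.take w).sum

/-- The sum of the lengths of the leftmost `w` columns of the Young diagram
whose multiset of row lengths is `S`. -/
def colSum (S : Multiset ℕ) (w : ℕ) : ℕ :=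
  ∑ c ∈ Finset.Icc 1 w, (S.filter (fun r => c ≤ r)).card

/-- A Young diagram with multiset of row lengths `R` is wide if every subdiagram formed
by a subset of the rows dominates its conjugate. -/
def Wide (R : Multiset ℕ) : Prop :=
  ∀ S : Multiset ℕ, S ≤ R → ∀ w : ℕ, 0 < w → colSum S w ≤ topSum S w

/-- A Young diagram with multiset of row lengths `R` is Latin if, listing its row lengths
as `l 1, ..., l m`, there is a filling `f` of its cells such that row `i` is filled by a
permutation of `1, ..., l i` and the entries in each column are pairwise distinct. -/
def IsLatin (R : Multiset ℕ) : Prop :=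
  ∃ (m : ℕ) (l : ℕ → ℕ) (f : ℕ → ℕ → ℕ),
    (Finset.Icc 1 m).val.map l = R ∧
    (∀ i ∈ Finset.Icc 1 m,
      Set.InjOn (f i) (Set.Icc 1 (l i)) ∧
      (Finset.Icc 1 (l i)).image (f i) = Finset.Icc 1 (l i)) ∧
    (∀ j, 1 ≤ j → ∀ i₁ ∈ Finset.Icc 1 m, ∀ i₂ ∈ Finset.Icc 1 m,
      j ≤ l i₁ → j ≤ l i₂ → f i₁ j = f i₂ j → i₁ = i₂)

/-- An allocation for the Young diagram `Y(a;e)` with `p` row blocks (where `a 0 = 0`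
and `b i = a i - a (i-1)`). -/
def HasAllocation (p : ℕ) (a e : ℕ → ℕ) : Prop :=
  ∃ z : ℕ → ℕ → ℕ → ℕ,
    (∀ i j, 1 ≤ j → j ≤ i → i ≤ p →
      ∑ k ∈ Finset.Icc 1 i, z i j k = e i * (a j - a (j - 1))) ∧
    (∀ i k, 1 ≤ k → k ≤ i → i ≤ p →
      ∑ j ∈ Finset.Icc 1 i, z i j k = e i * (a k - a (k - 1))) ∧
    (∀ j k, 1 ≤ j → j ≤ p → 1 ≤ k → k ≤ p →
      ∑ i ∈ Finset.Icc (max j k) p, z i j k ≤ (a j - a (j - 1)) * (a k - a (k - 1)))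

/-- `sc a e j k`: the sum of the lengths of the leftmost `a j` columns of the tail
subdiagram `Y_k`. -/
def sc (a e : ℕ → ℕ) (j k : ℕ) : ℕ :=
  ∑ i ∈ Finset.Icc 1 k, e i * min (a i) (a j)

/-- `sr a e j k`: the sum of the lengths of the top `a j` rows of the tail
subdiagram `Y_k`. -/
def sr (a e : ℕ → ℕ) (j k : ℕ) : ℕ :=
  topSum (rowMultiset k a e) (a j)

/-- `se e m k = ∑_{t=m}^{k} e t`. -/
def se (e : ℕ → ℕ) (m k : ℕ) : ℕ :=
  ∑ t ∈ Finset.Icc m k, e t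

/-!
Wideness is needed at two widths only. At width `1` it says that no subdiagram has more rows
than its longest row, so `e₁ + e₂ + e₃ ≤ a₃` and `e₁ + e₂ ≤ a₂`. At width `a₂`, the top `a₂`
rows of the whole diagram are `m = min(a₂, e₃)` rows of length `a₃`, then `n ≤ e₂` of length
`a₂` and `k` of length `a₁`, with `m + n + k ≤ a₂`; comparing them with the `a₂` leftmost
columns bounds `a₂ e₃ - b₃ m` by `a₁ (a₂ - e₁ - e₂) + b₂ (a₂ - e₂)` and by
`a₁ (a₂ - e₁ - e₂) + b₂ e₃`. Of the two remaining sums, `a₁ e₃ + b₂ e₃ = a₂ e₃` is trivially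
large enough and `a₁ e₃ + b₂ (a₂ - e₂)` dominates either it or the first bound, while the
comparison with `(a₂ - b₃) e₃ + b₃²` only needs `e₃ ≤ a₃`.
-/

lemma sort_replicate_add_replicate_add_replicate {a₁ a₂ a₃ : ℕ} (e₁ e₂ e₃ : ℕ)
    (h12 : a₁ ≤ a₂) (h23 : a₂ ≤ a₃) :
    Multiset.sort (Multiset.replicate e₁ a₁ + Multiset.replicate e₂ a₂ +
      Multiset.replicate e₃ a₃) (· ≤ ·) =
    List.replicate e₁ a₁ ++ List.replicate e₂ a₂ ++ List.replicate e₃ a₃ := by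
  refine List.Perm.eq_of_pairwise' (r := (· ≤ ·)) (Multiset.pairwise_sort _ _) ?_ ?_
  · simp only [List.pairwise_append, List.pairwise_replicate, List.mem_replicate,
      List.mem_append]
    refine ⟨⟨?_, ?_, ?_⟩, ?_, ?_⟩ <;> intros <;> omega
  · apply Multiset.coe_eq_coe.mp
    rw [Multiset.sort_eq]
    simp [← Multiset.coe_replicate]

lemma topSum_replicate_add_replicate_add_replicate {a₁ a₂ a₃ : ℕ} (e₁ e₂ e₃ w : ℕ)
    (h12 : a₁ ≤ a₂) (h23 : a₂ ≤ a₃) :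
    topSum (Multiset.replicate e₁ a₁ + Multiset.replicate e₂ a₂ +
      Multiset.replicate e₃ a₃) w =
    min w e₃ * a₃ + min (w - e₃) e₂ * a₂ + min (w - e₃ - e₂) e₁ * a₁ := by
  rw [topSum, sort_replicate_add_replicate_add_replicate _ _ _ h12 h23]
  simp only [List.reverse_append, List.reverse_replicate, List.take_append,
    List.take_replicate, List.sum_append, List.sum_replicate, List.length_replicate,
    smul_eq_mul]
  ring

lemma topSum_le_mul_of_forall_le {S : Multiset ℕ} {M : ℕ} (hS : ∀ r ∈ S, r ≤ M) (w : ℕ) :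
    topSum S w ≤ w * M := by
  unfold topSum
  set l := (Multiset.sort S (· ≤ ·)).reverse.take w
  calc l.sum ≤ l.length • M := List.sum_le_card_nsmul l M fun r hr =>
        hS r (by simpa [l] using List.mem_of_mem_take hr)
    _ ≤ w * M := by
        rw [smul_eq_mul]
        exact Nat.mul_le_mul_right M (List.length_take_le w _)

lemma colSum_add (S T : Multiset ℕ) (w : ℕ) :
    colSum (S + T) w = colSum S w + colSum T w := by
  simp only [colSum, Multiset.filter_add, Multiset.card_add, Finset.sum_add_distrib]

lemma colSum_replicate (e a w : ℕ) : colSum (Multiset.replicate e a) w = e * min w a := by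
  have hcard (c : ℕ) : ((Multiset.replicate e a).filter (c ≤ ·)).card = if c ≤ a then e else 0 := by
    split_ifs with hc
    · rw [Multiset.filter_eq_self.mpr fun r hr => (Multiset.eq_of_mem_replicate hr).symm ▸ hc,
        Multiset.card_replicate]
    · rw [Multiset.filter_eq_nil.mpr fun r hr => (Multiset.eq_of_mem_replicate hr).symm ▸ hc,
        Multiset.card_zero]
  rw [colSum, Finset.sum_congr rfl fun c _ => hcard c, Finset.sum_ite, Finset.sum_const_zero,
    add_zero, Finset.sum_const, smul_eq_mul]
  have : (Finset.Icc 1 w).filter (· ≤ a) = Finset.Icc 1 (min w a) := by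
    ext x
    simp only [Finset.mem_filter, Finset.mem_Icc]
    omega
  rw [this, Nat.card_Icc, Nat.add_sub_cancel, mul_comm]

lemma colSum_one_of_forall_pos {S : Multiset ℕ} (hS : ∀ r ∈ S, 0 < r) :
    colSum S 1 = S.card := by
  rw [colSum, Finset.Icc_self, Finset.sum_singleton]
  exact congrArg _ (Multiset.filter_eq_self.mpr hS)

lemma Wide.card_le_of_forall_le {R S : Multiset ℕ} (hR : Wide R) (hSR : S ≤ R) {M : ℕ}
    (hpos : ∀ r ∈ S, 0 < r) (hM : ∀ r ∈ S, r ≤ M) : S.card ≤ M := by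
  have h := hR S hSR 1 one_pos
  rw [colSum_one_of_forall_pos hpos] at h
  simpa using h.trans (topSum_le_mul_of_forall_le hM 1)

lemma middle_width_bounds {a₁ a₂ a₃ e₁ e₂ e₃ m n k : ℤ} (ha1 : 0 ≤ a₁) (h12 : a₁ ≤ a₂)
    (hme : m ≤ e₃) (hne : n ≤ e₂) (hk : 0 ≤ k) (hmnk : m + n + k ≤ a₂)
    (hwide : e₁ * a₁ + e₂ * a₂ + e₃ * a₂ ≤ m * a₃ + n * a₂ + k * a₁) :
    a₂ * e₃ - (a₃ - a₂) * m ≤ a₁ * (a₂ - e₁ - e₂) + (a₂ - a₁) * (a₂ - e₂) ∧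
      a₂ * e₃ - (a₃ - a₂) * m ≤ a₁ * (a₂ - e₁ - e₂) + (a₂ - a₁) * e₃ := by
  constructor
  · nlinarith [mul_nonneg hk (sub_nonneg.mpr h12), mul_nonneg (sub_nonneg.mpr hmnk) (ha1.trans h12)]
  · -- with `D = e₂ + e₃ - m - n ≥ 0` and `E = k + e₂ + e₃ - a₂ ≤ D`, the claim reads `E a₁ ≤ D a₂`
    have hD : 0 ≤ e₂ + e₃ - m - n := by linarith
    rcases le_total (k + e₂ + e₃ - a₂) 0 with hE | hE
    · nlinarith [mul_nonpos_of_nonpos_of_nonneg hE ha1, mul_nonneg hD (ha1.trans h12)]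
    · nlinarith [mul_le_mul_of_nonneg_right (by linarith : k + e₂ + e₃ - a₂ ≤ e₂ + e₃ - m - n) ha1,
        mul_le_mul_of_nonneg_left h12 hD]

lemma max_zero_le_min_add_min_min {α : Type*} [AddCommGroup α] [LinearOrder α]
    [IsOrderedAddMonoid α] {L X₁ X₂ Y₁ Y₂ Z : α} (hX₁ : 0 ≤ X₁) (hX₂ : 0 ≤ X₂)
    (hY₁ : 0 ≤ Y₁) (hY₂ : 0 ≤ Y₂) (hZ : 0 ≤ Z) (h₁₁ : L ≤ X₁ + Y₁) (h₁₂ : L ≤ X₁ + Y₂)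
    (h₂₁ : L ≤ X₂ + Y₁) (h₂₂ : L ≤ X₂ + Y₂) (hLZ : L ≤ Z) :
    max 0 L ≤ min (min X₁ X₂ + min Y₁ Y₂) Z := by
  refine max_le (le_min (add_nonneg (le_min hX₁ hX₂) (le_min hY₁ hY₂)) hZ) (le_min ?_ hLZ)
  rcases min_choice X₁ X₂ with hX | hX <;> rcases min_choice Y₁ Y₂ with hY | hY <;>
    rw [hX, hY] <;> assumption

lemma quad_interval_nonempty_of_bounds {a₁ a₂ a₃ e₁ e₂ e₃ : ℤ} (ha1 : 0 ≤ a₁)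
    (h12 : a₁ ≤ a₂) (h23 : a₂ ≤ a₃) (he1 : 0 ≤ e₁) (he2 : 0 ≤ e₂) (he3 : 0 ≤ e₃)
    (hrows : e₁ + e₂ + e₃ ≤ a₃) (hrows' : e₁ + e₂ ≤ a₂)
    (h₂₂ : a₂ * e₃ - (a₃ - a₂) * min a₂ e₃ ≤ a₁ * (a₂ - e₁ - e₂) + (a₂ - a₁) * (a₂ - e₂))
    (h₂₁ : a₂ * e₃ - (a₃ - a₂) * min a₂ e₃ ≤ a₁ * (a₂ - e₁ - e₂) + (a₂ - a₁) * e₃) :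
    max 0 (a₂ * e₃ - (a₃ - a₂) * min a₂ e₃) ≤
      min (min (a₁ * e₃) (a₁ * (a₂ - e₁ - e₂)) + min ((a₂ - a₁) * e₃) ((a₂ - a₁) * (a₂ - e₂)))
        ((a₂ - (a₃ - a₂)) * e₃ + (a₃ - a₂) ^ 2) := by
  have hb₂ : 0 ≤ a₂ - a₁ := sub_nonneg.mpr h12
  have hb₃ : 0 ≤ a₃ - a₂ := sub_nonneg.mpr h23
  have hm : 0 ≤ min a₂ e₃ := le_min (ha1.trans h12) he3
  have h₁₁ : a₂ * e₃ - (a₃ - a₂) * min a₂ e₃ ≤ a₁ * e₃ + (a₂ - a₁) * e₃ := by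
    nlinarith [mul_nonneg hb₃ hm]
  refine max_zero_le_min_add_min_min (mul_nonneg ha1 he3) (mul_nonneg ha1 (by linarith))
    (mul_nonneg hb₂ he3) (mul_nonneg hb₂ (by linarith)) ?_ h₁₁ ?_ h₂₁ h₂₂ ?_
  · nlinarith [mul_nonneg hb₃ (by linarith : 0 ≤ a₃ - e₃), sq_nonneg (a₃ - a₂ - e₃)]
  · rcases le_total (e₂ + e₃) a₂ with h | h
    · nlinarith [mul_nonneg hb₂ (by linarith : 0 ≤ a₂ - e₂ - e₃)]
    · nlinarith [mul_nonneg ha1 (by linarith : 0 ≤ e₁ + e₂ + e₃ - a₂)]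
  · rcases min_choice a₂ e₃ with h | h <;> rw [h]
    · nlinarith [mul_nonneg hb₃ (by linarith : 0 ≤ a₃ - e₃)]
    · nlinarith [sq_nonneg (a₃ - a₂)]

theorem quad_interval_nonempty_general (a₁ a₂ a₃ e₁ e₂ e₃ : ℕ)
    (ha1 : 0 < a₁) (ha12 : a₁ < a₂) (ha23 : a₂ < a₃)
    (b₂ b₃ : ℤ) (hb2 : b₂ = (a₂ : ℤ) - (a₁ : ℤ)) (hb3 : b₃ = (a₃ : ℤ) - (a₂ : ℤ))
    (hw : Wide (Multiset.replicate e₁ a₁ + Multiset.replicate e₂ a₂ +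
      Multiset.replicate e₃ a₃)) :
    max 0 ((a₂ : ℤ) * (e₃ : ℤ) - b₃ * min (a₂ : ℤ) (e₃ : ℤ)) ≤
      min
        (min ((a₁ : ℤ) * (e₃ : ℤ)) ((a₁ : ℤ) * ((a₂ : ℤ) - (e₁ : ℤ) - (e₂ : ℤ))) +
          min (b₂ * (e₃ : ℤ)) (b₂ * ((a₂ : ℤ) - (e₂ : ℤ))))
        (((a₂ : ℤ) - b₃) * (e₃ : ℤ) + b₃ ^ 2) := by
  subst hb2 hb3
  have hrows : e₁ + e₂ + e₃ ≤ a₃ := by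
    simpa using hw.card_le_of_forall_le le_rfl (M := a₃)
      (by simp only [Multiset.mem_add, Multiset.mem_replicate]; omega)
      (by simp only [Multiset.mem_add, Multiset.mem_replicate]; omega)
  have hrows' : e₁ + e₂ ≤ a₂ := by
    simpa using hw.card_le_of_forall_le (Multiset.le_add_right _ _) (M := a₂)
      (by simp only [Multiset.mem_add, Multiset.mem_replicate]; omega)
      (by simp only [Multiset.mem_add, Multiset.mem_replicate]; omega)
  have hmiddle := hw _ le_rfl a₂ (by omega)
  rw [colSum_add, colSum_add, colSum_replicate, colSum_replicate, colSum_replicate,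
    topSum_replicate_add_replicate_add_replicate _ _ _ _ ha12.le ha23.le, min_eq_right ha12.le,
    min_self, min_eq_left ha23.le] at hmiddle
  have hmiddle' := Int.ofNat_le.mpr hmiddle
  push_cast at hmiddle'
  obtain ⟨h₂₂, h₂₁⟩ := middle_width_bounds (by positivity) (by exact_mod_cast ha12.le)
    (by omega) (by omega) (by positivity) (by omega) hmiddle'
  exact quad_interval_nonempty_of_bounds (by positivity) (by exact_mod_cast ha12.le)
    (by exact_mod_cast ha23.le) (by positivity) (by positivity) (by positivity)
    (by exact_mod_cast hrows) (by exact_mod_cast hrows') h₂₂ h₂₁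

/-- nonemptiness of the interval `I_{u+v+y+w} = J₁ ∩ J₂`
for a wide Young diagram with three distinct row lengths (computed in `ℤ`). -/
theorem quad_interval_nonempty (a₁ a₂ a₃ e₁ e₂ e₃ : ℕ)
    (ha1 : 0 < a₁) (ha12 : a₁ < a₂) (ha23 : a₂ < a₃)
    (he1 : 0 < e₁) (he2 : 0 < e₂) (he3 : 0 < e₃)
    (b₂ b₃ : ℤ) (hb2 : b₂ = (a₂ : ℤ) - (a₁ : ℤ)) (hb3 : b₃ = (a₃ : ℤ) - (a₂ : ℤ))
    (hw : Wide (Multiset.replicate e₁ a₁ + Multiset.replicate e₂ a₂ +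
      Multiset.replicate e₃ a₃)) :
    max 0 ((a₂ : ℤ) * (e₃ : ℤ) - b₃ * min (a₂ : ℤ) (e₃ : ℤ)) ≤
      min
        (min ((a₁ : ℤ) * (e₃ : ℤ)) ((a₁ : ℤ) * ((a₂ : ℤ) - (e₁ : ℤ) - (e₂ : ℤ))) +
          min (b₂ * (e₃ : ℤ)) (b₂ * ((a₂ : ℤ) - (e₂ : ℤ))))
        (((a₂ : ℤ) - b₃) * (e₃ : ℤ) + b₃ ^ 2) :=
  quad_interval_nonempty_general a₁ a₂ a₃ e₁ e₂ e₃ ha1 ha12 ha23 b₂ b₃ hb2 hb3 hw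
end

section
/- Let a_1 < a_2 be positive integers and let e_1, e_2 be positive integers. If the Young diagram Y(a;e) with e_1 rows of length a_1 and e_2 rows of length a_2 is wide, then Y(a;e) has an allocation. -/
theorem List.sum_le_length_mul_add_sum_tsub (L : List ℕ) (m : ℕ) :
    L.sum ≤ L.length * m + (L.map (· - m)).sum := by
  induction L with
  | nil => simp
  | cons x L ih =>
    simp only [List.sum_cons, List.length_cons, List.map_cons]
    grind

theorem topSum_le (S : Multiset ℕ) (w m : ℕ) :
    topSum S w ≤ w * m + (S.map (· - m)).sum := by
  set L := ((Multiset.sort S (· ≤ ·)).reverse.take w)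
  have hsub : (L.map (· - m)).sum ≤ (S.map (· - m)).sum := by
    calc (L.map (· - m)).sum ≤ ((Multiset.sort S (· ≤ ·)).reverse.map (· - m)).sum :=
          ((List.take_sublist _ _).map _).sum_le_sum (fun _ _ => Nat.zero_le _)
      _ = (S.map (· - m)).sum := by
          rw [← Multiset.sum_coe, ← Multiset.map_coe, Multiset.coe_reverse, Multiset.sort_eq]
  calc topSum S w = L.sum := rfl
    _ ≤ L.length * m + (L.map (· - m)).sum := L.sum_le_length_mul_add_sum_tsub m
    _ ≤ w * m + (S.map (· - m)).sum :=
        add_le_add (Nat.mul_le_mul_right _ (List.length_take_le _ _)) hsub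

theorem colSum_eq_mul_card {S : Multiset ℕ} {w : ℕ} (h : ∀ r ∈ S, w ≤ r) :
    colSum S w = w * Multiset.card S := by
  rw [colSum, Finset.sum_congr rfl fun c hc => by
    rw [Multiset.filter_eq_self.2 fun r hr => (Finset.mem_Icc.1 hc).2.trans (h r hr)],
    Finset.sum_const, Nat.card_Icc, smul_eq_mul, Nat.add_sub_cancel]

theorem Wide.mul_card_le_topSum {R S : Multiset ℕ} (hR : Wide R) (hS : S ≤ R) {w : ℕ}
    (hw : 0 < w) (h : ∀ r ∈ S, w ≤ r) : w * Multiset.card S ≤ topSum S w :=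
  colSum_eq_mul_card h ▸ hR S hS w hw

theorem card_rowMultiset (p : ℕ) (a e : ℕ → ℕ) :
    Multiset.card (rowMultiset p a e) = ∑ i ∈ Finset.Icc 1 p, e i := by
  simp [rowMultiset, Multiset.card_sum]

theorem sum_map_rowMultiset (p : ℕ) (a e f : ℕ → ℕ) :
    ((rowMultiset p a e).map f).sum = ∑ i ∈ Finset.Icc 1 p, e i * f (a i) := by
  rw [rowMultiset]
  refine (map_sum (Multiset.sumAddMonoidHom.comp (Multiset.mapAddMonoidHom f)) _ _).trans ?_
  simp [Multiset.mapAddMonoidHom]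

theorem exists_eq_of_mem_rowMultiset {p : ℕ} {a e : ℕ → ℕ} {r : ℕ}
    (h : r ∈ rowMultiset p a e) :
    ∃ i ∈ Finset.Icc 1 p, r = a i := by
  simp only [rowMultiset, Multiset.mem_sum, Multiset.mem_replicate] at h
  obtain ⟨i, hi, -, rfl⟩ := h
  exact ⟨i, hi, rfl⟩

theorem rowMultiset_mono (a e : ℕ → ℕ) {p q : ℕ} (hpq : p ≤ q) :
    rowMultiset p a e ≤ rowMultiset q a e :=
  Finset.sum_le_sum_of_subset_of_nonneg (Finset.Icc_subset_Icc_right hpq) fun _ _ _ =>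
    Multiset.zero_le _

theorem exists_block_fill {b c e₁ e₂ : ℕ} (h₁ : e₁ ≤ b) (h₁₂ : e₁ + e₂ ≤ b + c)
    (hb : (e₁ + e₂) * b ≤ b * b + e₂ * c) :
    ∃ t s₁ s₂, t + s₁ = e₂ * b ∧ t + s₂ = e₂ * c ∧ e₁ * b + s₁ ≤ b * b ∧ t ≤ b * c ∧
      s₂ ≤ c * c := by
  have hb' : e₁ * b + e₂ * b ≤ b * b + e₂ * c := by rwa [← add_mul]
  have hbb : e₁ * b ≤ b * b := Nat.mul_le_mul_right b h₁
  have hbc : e₁ * b + e₂ * b ≤ b * b + b * c := by nlinarith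
  have hcb : e₂ * c ≤ b * c + c * c := by nlinarith
  have hcc : e₂ * c ≤ e₂ * b + c * c := by
    rcases le_total c b with h | h <;> nlinarith
  set t := max (e₁ * b + e₂ * b - b * b) (e₂ * c - c * c) with ht
  exact ⟨t, e₂ * b - t, e₂ * c - t, by omega⟩

theorem hasAllocation_two_of_exists {a e : ℕ → ℕ}
    (h : ∃ t s₁ s₂, t + s₁ = e 2 * (a 1 - a 0) ∧ t + s₂ = e 2 * (a 2 - a 1) ∧
      e 1 * (a 1 - a 0) + s₁ ≤ (a 1 - a 0) * (a 1 - a 0) ∧ t ≤ (a 1 - a 0) * (a 2 - a 1) ∧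
      s₂ ≤ (a 2 - a 1) * (a 2 - a 1)) :
    HasAllocation 2 a e := by
  obtain ⟨t, s₁, s₂, h₁, h₂, h₁₁, h₁₂, h₂₂⟩ := h
  refine ⟨fun i j k => if i = 1 then e 1 * (a 1 - a 0) else
      if j = 1 then (if k = 1 then s₁ else t) else (if k = 1 then t else s₂), ?_, ?_, ?_⟩
  · intro i j _ _ _
    interval_cases i <;> interval_cases j <;> simp [Finset.sum_Icc_succ_top] <;> omega
  · intro i k _ _ _
    interval_cases i <;> interval_cases k <;> simp [Finset.sum_Icc_succ_top] <;> omega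
  · intro j k _ _ _ _
    interval_cases j <;> interval_cases k <;> simp [Finset.sum_Icc_succ_top, Nat.mul_comm] <;>
      omega

theorem Wide.mul_sum_le {q : ℕ} {a e : ℕ → ℕ} (hw : Wide (rowMultiset q a e)) {p w : ℕ}
    (hpq : p ≤ q) (hw₀ : 0 < w) (ha : ∀ i ∈ Finset.Icc 1 p, w ≤ a i) (m : ℕ) :
    w * ∑ i ∈ Finset.Icc 1 p, e i ≤ w * m + ∑ i ∈ Finset.Icc 1 p, e i * (a i - m) := by
  have hrow : ∀ r ∈ rowMultiset p a e, w ≤ r := fun r hr => by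
    obtain ⟨i, hi, rfl⟩ := exists_eq_of_mem_rowMultiset hr
    exact ha i hi
  rw [← card_rowMultiset p a e, ← sum_map_rowMultiset p a e (· - m)]
  exact (hw.mul_card_le_topSum (rowMultiset_mono a e hpq) hw₀ hrow).trans (topSum_le _ _ _)

theorem wide_implies_allocation_two_general (a e : ℕ → ℕ)
    (ha0 : a 0 = 0) (ha1 : 0 < a 1) (ha12 : a 1 < a 2)
    (hw : Wide (rowMultiset 2 a e)) :
    HasAllocation 2 a e := by
  have hIcc : Finset.Icc 1 2 = {1, 2} := rfl
  have h₁ : e 1 ≤ a 1 := by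
    simpa using hw.mul_sum_le one_le_two one_pos (by simp; omega) (a 1)
  have h₁₂ : e 1 + e 2 ≤ a 2 := by
    simpa [hIcc, ha1, ha12.le] using hw.mul_sum_le le_rfl one_pos (by simp [hIcc]; omega) (a 2)
  have hcap : (e 1 + e 2) * a 1 ≤ a 1 * a 1 + e 2 * (a 2 - a 1) := by
    simpa [hIcc, mul_comm] using hw.mul_sum_le le_rfl ha1 (by simp [hIcc, ha12.le]) (a 1)
  have hb₁ : a 1 - a 0 = a 1 := by rw [ha0, Nat.sub_zero]
  refine hasAllocation_two_of_exists (exists_block_fill ?_ ?_ ?_) <;> rw [hb₁]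
  · exact h₁
  · omega
  · exact hcap

/-- a wide Young diagram with two distinct row lengths has an allocation. -/
theorem wide_implies_allocation_two (a e : ℕ → ℕ)
    (ha0 : a 0 = 0) (ha1 : 0 < a 1) (ha12 : a 1 < a 2)
    (he : ∀ i, 1 ≤ i → i ≤ 2 → 0 < e i)
    (hw : Wide (rowMultiset 2 a e)) :
    HasAllocation 2 a e :=
  wide_implies_allocation_two_general a e ha0 ha1 ha12 hw
end
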